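/- arXiv:1910.12796 — 5 statements merged into one kernel-verified Lean document; each statement's English description precedes it below -/
import Mathlib

section
/- Suppose all ratios of radii of adjacent circles in a circle-packed triangulation are bounded above by M > 0. Then every Dubejko edge weight is at least (2/(M+1)) * sqrt(1/(2M+1)). Concretely: if r_u, r_v, R_1, R_2 > 0 satisfy r_u ≤ M r_v, r_v ≤ M r_u, r_u ≤ M R_i, r_v ≤ M R_i for i = 1, 2, then (sqrt(r_u r_v)/(r_u + r_v)) * (sqrt(R_1/(r_u + r_v + R_1)) + sqrt(R_2/(r_u + r_v + R_2))) ≥ (2/(M+1)) * sqrt(1/(2M+1)). -/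
open Real

/-- If all ratios of radii of adjacent circles are bounded by `M`, then every Dubejko
edge weight is at least `(2/(M+1)) * sqrt (1/(2M+1))`. -/
theorem dubejko_weight_lower_bound (M ru rv R1 R2 : ℝ) (hM : 0 < M)
    (hru : 0 < ru) (hrv : 0 < rv) (hR1 : 0 < R1) (hR2 : 0 < R2)
    (h1 : ru ≤ M * rv) (h2 : rv ≤ M * ru)
    (h3 : ru ≤ M * R1) (h4 : rv ≤ M * R1)
    (h5 : ru ≤ M * R2) (h6 : rv ≤ M * R2) :
    (2 / (M + 1)) * Real.sqrt (1 / (2 * M + 1)) ≤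
      (Real.sqrt (ru * rv) / (ru + rv)) *
        (Real.sqrt (R1 / (ru + rv + R1)) + Real.sqrt (R2 / (ru + rv + R2))) := by
  have hM1 : 1 ≤ M := by nlinarith
  have hsum : 0 < ru + rv := by linarith
  have hA : 1 / (M + 1) ≤ Real.sqrt (ru * rv) / (ru + rv) := by
    rw [div_le_div_iff₀ (by linarith) hsum]
    have : (ru + rv) / (M + 1) ≤ Real.sqrt (ru * rv) := by
      rw [show (ru + rv) / (M + 1) = Real.sqrt (((ru + rv) / (M + 1))^2) from
        (Real.sqrt_sq (by positivity)).symm]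
      apply Real.sqrt_le_sqrt
      rw [div_pow]
      rw [div_le_iff₀ (by positivity)]
      nlinarith
    calc 1 * (ru + rv) = ((ru + rv) / (M + 1)) * (M + 1) := by field_simp
    _ ≤ Real.sqrt (ru * rv) * (M + 1) := by
        apply mul_le_mul_of_nonneg_right this (by linarith)
  have key : ∀ R : ℝ, 0 < R → ru ≤ M * R → rv ≤ M * R →
      Real.sqrt (1 / (2 * M + 1)) ≤ Real.sqrt (R / (ru + rv + R)) := by
    intro R hR hu hv
    apply Real.sqrt_le_sqrt
    rw [div_le_div_iff₀ (by linarith) (by linarith)]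
    nlinarith
  have hB1 := key R1 hR1 h3 h4
  have hB2 := key R2 hR2 h5 h6
  have hs : 0 ≤ Real.sqrt (1 / (2 * M + 1)) := Real.sqrt_nonneg _
  calc (2 / (M + 1)) * Real.sqrt (1 / (2 * M + 1))
      = (1 / (M + 1)) * (Real.sqrt (1 / (2 * M + 1)) + Real.sqrt (1 / (2 * M + 1))) := by
        ring
    _ ≤ (Real.sqrt (ru * rv) / (ru + rv)) *
        (Real.sqrt (R1 / (ru + rv + R1)) + Real.sqrt (R2 / (ru + rv + R2))) := by
        apply mul_le_mul hA (by linarith) (by linarith) (by positivity)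
end

section
/- With notation as above (unit circle at v tangent to circles of radii r_1, r_2, inradius r = tan α where 2α is the angle at v), the following inequality holds: r/(1 + r_1) + r/(1 + r_2) < sin(2α) < 2α. Consequently, for any circle-packed triangulation, the sum of Dubejko weights of the edges incident to any fixed vertex is strictly less than 2π. -/
open Real

/-- For each face incident to a fixed vertex `v` (whose circle is normalized to radius 1),
with adjacent radii `r₁ i, r₂ i`, half-angle `α i` at `v`, and inradius `r i = tan (α i)`
satisfying `1/cos²(α i) = (1+r₁ i)(1+r₂ i)/(1+r₁ i+r₂ i)`, the contribution of the face
to the Dubejko weights satisfies `r/(1+r₁) + r/(1+r₂) < sin (2α) < 2α`; consequently,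
since the angles `2α i` sum to `2π`, the sum of the Dubejko weights of the edges
incident to `v` is strictly less than `2π`. -/
theorem sum_dubejko_weights_lt_two_pi (n : ℕ) (r r1 r2 α : Fin n → ℝ)
    (h1 : ∀ i, 0 < r1 i) (h2 : ∀ i, 0 < r2 i)
    (hα : ∀ i, 0 < α i ∧ α i < π / 2)
    (hr : ∀ i, r i = Real.tan (α i))
    (hcos : ∀ i, 1 / Real.cos (α i) ^ 2 = (1 + r1 i) * (1 + r2 i) / (1 + r1 i + r2 i))
    (hsum : ∑ i, 2 * α i = 2 * π) :
    (∀ i, r i / (1 + r1 i) + r i / (1 + r2 i) < Real.sin (2 * α i) ∧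
        Real.sin (2 * α i) < 2 * α i) ∧
      ∑ i, (r i / (1 + r1 i) + r i / (1 + r2 i)) < 2 * π := by
  have key : ∀ i, r i / (1 + r1 i) + r i / (1 + r2 i) < Real.sin (2 * α i) ∧
      Real.sin (2 * α i) < 2 * α i := by
    intro i
    obtain ⟨hα0, hα2⟩ := hα i
    have hcos0 : 0 < Real.cos (α i) :=
      Real.cos_pos_of_mem_Ioo ⟨by linarith [Real.pi_pos], hα2⟩
    have hsin0 : 0 < Real.sin (α i) := Real.sin_pos_of_pos_of_lt_pi hα0 (by linarith [Real.pi_pos])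
    have hr0 : 0 < r i := by
      rw [hr i]
      exact Real.tan_pos_of_pos_of_lt_pi_div_two hα0 hα2
    have hd1 : (0:ℝ) < 1 + r1 i := by linarith [h1 i]
    have hd2 : (0:ℝ) < 1 + r2 i := by linarith [h2 i]
    have hd3 : (0:ℝ) < 1 + r1 i + r2 i := by linarith [h1 i, h2 i]
    -- cos² α = (1 + r1 + r2) / ((1+r1)(1+r2))
    have hc2 : Real.cos (α i) ^ 2 = (1 + r1 i + r2 i) / ((1 + r1 i) * (1 + r2 i)) := by
      have h := hcos i
      field_simp at h ⊢
      linarith [h]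
    -- sin (2α) = 2 * r * cos² α
    have hsin2 : Real.sin (2 * α i) = 2 * r i * Real.cos (α i) ^ 2 := by
      rw [Real.sin_two_mul, hr i, Real.tan_eq_sin_div_cos]
      field_simp
    constructor
    · rw [hsin2, hc2]
      rw [div_add_div _ _ (ne_of_gt hd1) (ne_of_gt hd2)]
      have hrhs : 2 * r i * ((1 + r1 i + r2 i) / ((1 + r1 i) * (1 + r2 i)))
          = (2 * r i * (1 + r1 i + r2 i)) / ((1 + r1 i) * (1 + r2 i)) := by ring
      rw [hrhs, div_lt_div_iff₀ (by positivity) (by positivity)]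
      nlinarith [mul_pos (mul_pos hr0 (add_pos (h1 i) (h2 i))) (mul_pos hd1 hd2)]
    · rw [hsin2, hc2]
      have hlt : Real.sin (2 * α i) < 2 * α i := by
        have := Real.sin_lt (x := 2 * α i) (by linarith)
        exact this
      rw [hsin2, hc2] at hlt
      exact hlt
  refine ⟨key, ?_⟩
  have hn : (Finset.univ : Finset (Fin n)).Nonempty := by
    rcases Nat.eq_zero_or_pos n with h | h
    · exfalso
      subst h
      simp at hsum
    · exact ⟨⟨0, h⟩, Finset.mem_univ _⟩
  calc ∑ i, (r i / (1 + r1 i) + r i / (1 + r2 i))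
      < ∑ i, 2 * α i := by
        apply Finset.sum_lt_sum_of_nonempty hn
        intro i _
        exact lt_trans (key i).1 (key i).2
    _ = 2 * π := hsum
end

section
/- Let x, y, z be centers of mutually externally tangent circles with radii r_x, r_y, r_z, let M and r be the incenter and inradius of triangle xyz, and let Q, R be the tangency points of the incircle with sides xy and xz. Then the angle ∠QMR is greater than 2 * arctan(sqrt(r_x / min(r_y, r_z))). -/
open Real EuclideanGeometry RealInnerProductSpace

lemma aux_incenter_ineq (rx ry rz m : ℝ) (hrx : 0 < rx) (hry : 0 < ry) (hrz : 0 < rz)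
    (hm : m = min ry rz) :
    (rx * ry * rz / (rx + ry + rz) - 2 * rx ^ 2 * ry * rz / ((rx + ry) * (rx + rz)))
      / (rx * ry * rz / (rx + ry + rz)) < (m - rx) / (m + rx) := by
  have hmpos : 0 < m := hm ▸ lt_min hry hrz
  have ha : (0:ℝ) < rx + ry := by positivity
  have hb : (0:ℝ) < rx + rz := by positivity
  have hS : (0:ℝ) < rx + ry + rz := by positivity
  have hmain : (rx + ry) * (rx + rz) < (rx + ry + rz) * (m + rx) := by
    rcases le_total ry rz with h | h
    · rw [hm, min_eq_left h]; nlinarith [mul_pos ha hry]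
    · rw [hm, min_eq_right h]; nlinarith [mul_pos hb hrz]
  have lhs_eq : (rx * ry * rz / (rx + ry + rz)
        - 2 * rx ^ 2 * ry * rz / ((rx + ry) * (rx + rz)))
        / (rx * ry * rz / (rx + ry + rz))
      = 1 - 2 * rx * (rx + ry + rz) / ((rx + ry) * (rx + rz)) := by
    field_simp
  have rhs_eq : (m - rx) / (m + rx) = 1 - 2 * rx / (m + rx) := by
    field_simp
    ring
  rw [lhs_eq, rhs_eq]
  have hlt : 2 * rx / (m + rx) < 2 * rx * (rx + ry + rz) / ((rx + ry) * (rx + rz)) := by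
    rw [div_lt_div_iff₀ (by positivity) (by positivity)]
    nlinarith [mul_lt_mul_of_pos_left hmain (by positivity : (0:ℝ) < 2 * rx)]
  linarith

/-- Let `x, y, z` be centers of mutually externally tangent circles of radii
`rx, ry, rz`, let `M` and `r` be the incenter and inradius of the triangle `xyz`
(`M` lies inside the triangle, at distance `r` from the tangency points `Q, R` of
the incircle with the sides `xy` and `xz`, where `dist x Q = dist x R = rx`).
Then the angle `∠ Q M R` exceeds `2 * arctan (sqrt (rx / min ry rz))`. -/
theorem angle_at_incenter_gt (x y z M Q R : EuclideanSpace ℝ (Fin 2)) (rx ry rz r : ℝ)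
    (hrx : 0 < rx) (hry : 0 < ry) (hrz : 0 < rz)
    (hxy : dist x y = rx + ry) (hxz : dist x z = rx + rz) (hyz : dist y z = ry + rz)
    (hr : r = Real.sqrt (rx * ry * rz / (rx + ry + rz)))
    (hM : M ∈ interior (convexHull ℝ ({x, y, z} : Set (EuclideanSpace ℝ (Fin 2)))))
    (hQ : Q ∈ segment ℝ x y) (hxQ : dist x Q = rx)
    (hR : R ∈ segment ℝ x z) (hxR : dist x R = rx)
    (hMQ : dist M Q = r) (hMR : dist M R = r)
    (hperpQ : ⟪M - Q, y - x⟫ = (0 : ℝ))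
    (hperpR : ⟪M - R, z - x⟫ = (0 : ℝ)) :
    EuclideanGeometry.angle Q M R > 2 * Real.arctan (Real.sqrt (rx / min ry rz)) := by
  clear hM
  have hS : 0 < rx + ry + rz := by positivity
  have hrpos : 0 < r := by rw [hr]; positivity
  have hr2 : r ^ 2 = rx * ry * rz / (rx + ry + rz) := by
    rw [hr, sq_sqrt (by positivity)]
  set u := y - x with hu
  set v := z - x with hv
  set w := M - x with hw
  have ha : (0:ℝ) < rx + ry := by positivity
  have hb : (0:ℝ) < rx + rz := by positivity
  have hnu : ‖u‖ = rx + ry := by rw [hu, ← dist_eq_norm, dist_comm]; exact hxy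
  have hnv : ‖v‖ = rx + rz := by rw [hv, ← dist_eq_norm, dist_comm]; exact hxz
  have hnuv : ‖u - v‖ = ry + rz := by
    have : u - v = y - z := by rw [hu, hv]; abel
    rw [this, ← dist_eq_norm]; exact hyz
  -- Q - x = (rx/(rx+ry)) • u
  obtain ⟨s, t, hs, ht, hst, hQeq⟩ := hQ
  have hQx : Q - x = (rx / (rx + ry)) • u := by
    have h1 : Q - x = t • u := by
      rw [← hQeq, hu]
      have : s = 1 - t := by linarith
      rw [this]; module
    have h2 : t * (rx + ry) = rx := by
      have := hxQ
      rw [dist_comm, dist_eq_norm, h1, norm_smul, hnu, Real.norm_eq_abs, abs_of_nonneg ht] at this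
      linarith [this]
    have ht' : t = rx / (rx + ry) := by field_simp at h2 ⊢; linarith
    rw [h1, ht']
  obtain ⟨s', t', hs', ht', hst', hReq⟩ := hR
  have hRx : R - x = (rx / (rx + rz)) • v := by
    have h1 : R - x = t' • v := by
      rw [← hReq, hv]
      have : s' = 1 - t' := by linarith
      rw [this]; module
    have h2 : t' * (rx + rz) = rx := by
      have := hxR
      rw [dist_comm, dist_eq_norm, h1, norm_smul, hnv, Real.norm_eq_abs, abs_of_nonneg ht'] at this
      linarith [this]
    have ht'' : t' = rx / (rx + rz) := by field_simp at h2 ⊢; linarith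
    rw [h1, ht'']
  have hMQn : ‖M - Q‖ = r := by rw [← dist_eq_norm]; exact hMQ
  have hMRn : ‖M - R‖ = r := by rw [← dist_eq_norm]; exact hMR
  -- inner products with w
  have hwu : ⟪w, u⟫ = rx * (rx + ry) := by
    have hsplit : w = (M - Q) + (Q - x) := by rw [hw]; abel
    rw [hsplit, inner_add_left, hperpQ, hQx, real_inner_smul_left,
      real_inner_self_eq_norm_sq, hnu]
    field_simp; ring
  have hwv : ⟪w, v⟫ = rx * (rx + rz) := by
    have hsplit : w = (M - R) + (R - x) := by rw [hw]; abel
    rw [hsplit, inner_add_left, hperpR, hRx, real_inner_smul_left,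
      real_inner_self_eq_norm_sq, hnv]
    field_simp; ring
  have hww : ⟪w, w⟫ = r ^ 2 + rx ^ 2 := by
    have hsplit : w = (M - Q) + (Q - x) := by rw [hw]; abel
    have hperp' : ⟪M - Q, Q - x⟫ = (0:ℝ) := by
      rw [hQx, real_inner_smul_right, hperpQ, mul_zero]
    rw [hsplit, real_inner_add_add_self, hperp']
    rw [real_inner_self_eq_norm_sq, real_inner_self_eq_norm_sq, hMQn]
    have : ‖Q - x‖ = rx := by rw [← dist_eq_norm, dist_comm]; exact hxQ
    rw [this]; ring
  have huv : ⟪u, v⟫ = ((rx + ry) ^ 2 + (rx + rz) ^ 2 - (ry + rz) ^ 2) / 2 := by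
    have := norm_sub_sq_real u v
    rw [hnu, hnv, hnuv] at this
    linarith
  -- the key inner product
  have hQM : Q - M = (rx / (rx + ry)) • u - w := by
    rw [← hQx, hw]; abel
  have hRM : R - M = (rx / (rx + rz)) • v - w := by
    rw [← hRx, hw]; abel
  have expand : ∀ a b : EuclideanSpace ℝ (Fin 2),
      ⟪a - w, b - w⟫ = ⟪a, b⟫ - ⟪a, w⟫ - ⟪w, b⟫ + ⟪w, w⟫ := by
    intro a b
    simp only [inner_sub_left, inner_sub_right]; ring
  have hwu' : ⟪u, w⟫ = rx * (rx + ry) := by rw [real_inner_comm]; exact hwu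
  have key : ⟪Q - M, R - M⟫ = r ^ 2 - 2 * rx ^ 2 * ry * rz / ((rx + ry) * (rx + rz)) := by
    rw [hQM, hRM, expand, real_inner_smul_left, real_inner_smul_left,
      real_inner_smul_right, real_inner_smul_right]
    rw [hwu', hwv, hww, huv]
    field_simp
    ring
  -- cosine of the angle
  have hQMne : ‖Q - M‖ = r := by rw [← neg_sub, norm_neg]; exact hMQn
  have hRMne : ‖R - M‖ = r := by rw [← neg_sub, norm_neg]; exact hMRn
  have hcos : Real.cos (EuclideanGeometry.angle Q M R) = ⟪Q - M, R - M⟫ / (r * r) := by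
    rw [EuclideanGeometry.angle, show Q -ᵥ M = Q - M from rfl,
      show R -ᵥ M = R - M from rfl, InnerProductGeometry.cos_angle, hQMne, hRMne]
  -- cosine of the bound
  set m := min ry rz with hm
  have hmpos : 0 < m := lt_min hry hrz
  set s0 := Real.sqrt (rx / m) with hs0
  have hs0pos : 0 < s0 := Real.sqrt_pos.mpr (by positivity)
  have hs0sq : s0 ^ 2 = rx / m := Real.sq_sqrt (by positivity)
  have hcosθ : Real.cos (2 * Real.arctan s0) = (m - rx) / (m + rx) := by
    rw [Real.cos_two_mul, Real.cos_arctan]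
    rw [div_pow, one_pow, Real.sq_sqrt (by positivity : (0:ℝ) ≤ 1 + s0 ^ 2), hs0sq]
    field_simp
    ring
  -- the strict cosine inequality
  have hineq : ⟪Q - M, R - M⟫ / (r * r) < (m - rx) / (m + rx) := by
    have hrr : r * r = rx * ry * rz / (rx + ry + rz) := by rw [← sq]; exact hr2
    rw [key, hr2, hrr]
    exact aux_incenter_ineq rx ry rz m hrx hry hrz hm
  have hcoslt : Real.cos (EuclideanGeometry.angle Q M R) < Real.cos (2 * Real.arctan s0) := by
    rw [hcos, hcosθ]; exact hineq
  by_contra hcon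
  push_neg at hcon
  have h1 : Real.cos (2 * Real.arctan s0) ≤ Real.cos (EuclideanGeometry.angle Q M R) :=
    Real.cos_le_cos_of_nonneg_of_le_pi (EuclideanGeometry.angle_nonneg _ _ _)
      (by have := Real.arctan_lt_pi_div_two s0; linarith) hcon
  linarith
end

section
/- (Descartes' Circle Theorem, externally tangent case) Let three circles in the plane with curvatures k_1, k_2, k_3 be mutually externally tangent at three distinct points. Then a fourth circle tangent to all three has curvature k satisfying k = k_1 + k_2 + k_3 ± 2 sqrt(k_1 k_2 + k_2 k_3 + k_3 k_1). -/
open Real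

private lemma dist_sq_coords (x y : EuclideanSpace ℝ (Fin 2)) :
    dist x y ^ 2 = (x 0 - y 0) ^ 2 + (x 1 - y 1) ^ 2 := by
  rw [EuclideanSpace.dist_eq, Real.sq_sqrt (by positivity)]
  simp [Fin.sum_univ_two, Real.dist_eq, sq_abs]

private lemma cm_planar (a1 b1 a2 b2 a3 b3 a4 b4 : ℝ) :
    (-2) * ((a2 - a3) ^ 2 + (b2 - b3) ^ 2) * ((a4 - a2) ^ 2 + (b4 - b2) ^ 2) * ((a4 - a3) ^ 2 + (b4 - b3) ^ 2) +
    2 * ((a4 - a1) ^ 2 + (b4 - b1) ^ 2) * ((a2 - a3) ^ 2 + (b2 - b3) ^ 2) * ((a4 - a3) ^ 2 + (b4 - b3) ^ 2) +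
    2 * ((a4 - a1) ^ 2 + (b4 - b1) ^ 2) * ((a2 - a3) ^ 2 + (b2 - b3) ^ 2) * ((a4 - a2) ^ 2 + (b4 - b2) ^ 2) +
    (-2) * ((a4 - a1) ^ 2 + (b4 - b1) ^ 2) * ((a2 - a3) ^ 2 + (b2 - b3) ^ 2) * ((a2 - a3) ^ 2 + (b2 - b3) ^ 2) +
    (-2) * ((a4 - a1) ^ 2 + (b4 - b1) ^ 2) * ((a4 - a1) ^ 2 + (b4 - b1) ^ 2) * ((a2 - a3) ^ 2 + (b2 - b3) ^ 2) +
    2 * ((a1 - a3) ^ 2 + (b1 - b3) ^ 2) * ((a4 - a2) ^ 2 + (b4 - b2) ^ 2) * ((a4 - a3) ^ 2 + (b4 - b3) ^ 2) +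
    (-2) * ((a1 - a3) ^ 2 + (b1 - b3) ^ 2) * ((a4 - a2) ^ 2 + (b4 - b2) ^ 2) * ((a4 - a2) ^ 2 + (b4 - b2) ^ 2) +
    2 * ((a1 - a3) ^ 2 + (b1 - b3) ^ 2) * ((a2 - a3) ^ 2 + (b2 - b3) ^ 2) * ((a4 - a2) ^ 2 + (b4 - b2) ^ 2) +
    (-2) * ((a1 - a3) ^ 2 + (b1 - b3) ^ 2) * ((a4 - a1) ^ 2 + (b4 - b1) ^ 2) * ((a4 - a3) ^ 2 + (b4 - b3) ^ 2) +
    2 * ((a1 - a3) ^ 2 + (b1 - b3) ^ 2) * ((a4 - a1) ^ 2 + (b4 - b1) ^ 2) * ((a4 - a2) ^ 2 + (b4 - b2) ^ 2) +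
    2 * ((a1 - a3) ^ 2 + (b1 - b3) ^ 2) * ((a4 - a1) ^ 2 + (b4 - b1) ^ 2) * ((a2 - a3) ^ 2 + (b2 - b3) ^ 2) +
    (-2) * ((a1 - a3) ^ 2 + (b1 - b3) ^ 2) * ((a1 - a3) ^ 2 + (b1 - b3) ^ 2) * ((a4 - a2) ^ 2 + (b4 - b2) ^ 2) +
    (-2) * ((a1 - a2) ^ 2 + (b1 - b2) ^ 2) * ((a4 - a3) ^ 2 + (b4 - b3) ^ 2) * ((a4 - a3) ^ 2 + (b4 - b3) ^ 2) +
    2 * ((a1 - a2) ^ 2 + (b1 - b2) ^ 2) * ((a4 - a2) ^ 2 + (b4 - b2) ^ 2) * ((a4 - a3) ^ 2 + (b4 - b3) ^ 2) +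
    2 * ((a1 - a2) ^ 2 + (b1 - b2) ^ 2) * ((a2 - a3) ^ 2 + (b2 - b3) ^ 2) * ((a4 - a3) ^ 2 + (b4 - b3) ^ 2) +
    2 * ((a1 - a2) ^ 2 + (b1 - b2) ^ 2) * ((a4 - a1) ^ 2 + (b4 - b1) ^ 2) * ((a4 - a3) ^ 2 + (b4 - b3) ^ 2) +
    (-2) * ((a1 - a2) ^ 2 + (b1 - b2) ^ 2) * ((a4 - a1) ^ 2 + (b4 - b1) ^ 2) * ((a4 - a2) ^ 2 + (b4 - b2) ^ 2) +
    2 * ((a1 - a2) ^ 2 + (b1 - b2) ^ 2) * ((a4 - a1) ^ 2 + (b4 - b1) ^ 2) * ((a2 - a3) ^ 2 + (b2 - b3) ^ 2) +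
    2 * ((a1 - a2) ^ 2 + (b1 - b2) ^ 2) * ((a1 - a3) ^ 2 + (b1 - b3) ^ 2) * ((a4 - a3) ^ 2 + (b4 - b3) ^ 2) +
    2 * ((a1 - a2) ^ 2 + (b1 - b2) ^ 2) * ((a1 - a3) ^ 2 + (b1 - b3) ^ 2) * ((a4 - a2) ^ 2 + (b4 - b2) ^ 2) +
    (-2) * ((a1 - a2) ^ 2 + (b1 - b2) ^ 2) * ((a1 - a3) ^ 2 + (b1 - b3) ^ 2) * ((a2 - a3) ^ 2 + (b2 - b3) ^ 2) +
    (-2) * ((a1 - a2) ^ 2 + (b1 - b2) ^ 2) * ((a1 - a2) ^ 2 + (b1 - b2) ^ 2) * ((a4 - a3) ^ 2 + (b4 - b3) ^ 2) = 0 := by ring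

set_option maxHeartbeats 1000000 in
private lemma descartes_main (x1 x2 x3 x4 : EuclideanSpace ℝ (Fin 2))
    (r1 r2 r3 p k1 k2 k3 k : ℝ)
    (hr1 : 0 < r1) (hr2 : 0 < r2) (hr3 : 0 < r3) (hp : p ≠ 0)
    (hk1 : k1 = 1 / r1) (hk2 : k2 = 1 / r2) (hk3 : k3 = 1 / r3) (hk : k = 1 / p)
    (e12 : (x1 0 - x2 0) ^ 2 + (x1 1 - x2 1) ^ 2 = (r1 + r2) ^ 2)
    (e13 : (x1 0 - x3 0) ^ 2 + (x1 1 - x3 1) ^ 2 = (r1 + r3) ^ 2)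
    (e23 : (x2 0 - x3 0) ^ 2 + (x2 1 - x3 1) ^ 2 = (r2 + r3) ^ 2)
    (e41 : (x4 0 - x1 0) ^ 2 + (x4 1 - x1 1) ^ 2 = (p + r1) ^ 2)
    (e42 : (x4 0 - x2 0) ^ 2 + (x4 1 - x2 1) ^ 2 = (p + r2) ^ 2)
    (e43 : (x4 0 - x3 0) ^ 2 + (x4 1 - x3 1) ^ 2 = (p + r3) ^ 2) :
    k = k1 + k2 + k3 + 2 * Real.sqrt (k1 * k2 + k2 * k3 + k3 * k1) ∨
      k = k1 + k2 + k3 - 2 * Real.sqrt (k1 * k2 + k2 * k3 + k3 * k1) := by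
  have cm := cm_planar (x1 0) (x1 1) (x2 0) (x2 1) (x3 0) (x3 1) (x4 0) (x4 1)
  rw [e12, e13, e23, e41, e42, e43] at cm
  have hT : (r2 * r3 * p + r1 * r3 * p + r1 * r2 * p + r1 * r2 * r3) ^ 2 =
      2 * ((r2 * r3 * p) ^ 2 + (r1 * r3 * p) ^ 2 + (r1 * r2 * p) ^ 2 + (r1 * r2 * r3) ^ 2) := by
    linear_combination cm / 32
  have hS : 0 ≤ k1 * k2 + k2 * k3 + k3 * k1 := by
    subst hk1 hk2 hk3; positivity
  have hG : (r1 * r2 * r3 - p * (r2 * r3 + r1 * r3 + r1 * r2)) ^ 2 =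
      4 * p ^ 2 * (r1 * r2 * r3) * (r1 + r2 + r3) := by
    linear_combination -hT
  have h1 := hr1.ne'
  have h2 := hr2.ne'
  have h3 := hr3.ne'
  have hkey : (k - (k1 + k2 + k3)) ^ 2 = 4 * (k1 * k2 + k2 * k3 + k3 * k1) := by
    have ha : k - (k1 + k2 + k3) =
        (r1 * r2 * r3 - p * (r2 * r3 + r1 * r3 + r1 * r2)) / (p * (r1 * r2 * r3)) := by
      subst hk1 hk2 hk3 hk
      rw [eq_div_iff (mul_ne_zero hp (mul_ne_zero (mul_ne_zero h1 h2) h3))]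
      field_simp
    have hb : 4 * (k1 * k2 + k2 * k3 + k3 * k1) =
        4 * p ^ 2 * (r1 * r2 * r3) * (r1 + r2 + r3) / (p * (r1 * r2 * r3)) ^ 2 := by
      subst hk1 hk2 hk3
      rw [eq_div_iff (pow_ne_zero 2 (mul_ne_zero hp (mul_ne_zero (mul_ne_zero h1 h2) h3)))]
      field_simp
      ring
    rw [ha, hb, div_pow, hG]
  have hsq : (2 * Real.sqrt (k1 * k2 + k2 * k3 + k3 * k1)) ^ 2 =
      4 * (k1 * k2 + k2 * k3 + k3 * k1) := by
    rw [mul_pow, Real.sq_sqrt hS]; ring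
  have hfac : (k - (k1 + k2 + k3) - 2 * Real.sqrt (k1 * k2 + k2 * k3 + k3 * k1)) *
      (k - (k1 + k2 + k3) + 2 * Real.sqrt (k1 * k2 + k2 * k3 + k3 * k1)) = 0 := by
    linear_combination hkey - hsq
  rcases mul_eq_zero.1 hfac with h | h
  · left; linarith
  · right; linarith

/-- Descartes' Circle Theorem (externally tangent case): if three circles with
curvatures `k₁, k₂, k₃` are mutually externally tangent at three distinct points,
then a fourth circle tangent to all three (externally, with curvature `1/r₄`, or
internally containing all three, with curvature `-1/r₄`) has curvature `k` satisfying
`k = k₁ + k₂ + k₃ ± 2 √(k₁k₂ + k₂k₃ + k₃k₁)`. -/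
theorem descartes_circle_theorem
    (x1 x2 x3 x4 : EuclideanSpace ℝ (Fin 2)) (r1 r2 r3 r4 k1 k2 k3 k : ℝ)
    (hr1 : 0 < r1) (hr2 : 0 < r2) (hr3 : 0 < r3) (hr4 : 0 < r4)
    (hk1 : k1 = 1 / r1) (hk2 : k2 = 1 / r2) (hk3 : k3 = 1 / r3)
    (h12 : dist x1 x2 = r1 + r2) (h13 : dist x1 x3 = r1 + r3) (h23 : dist x2 x3 = r2 + r3)
    (h4 : (k = 1 / r4 ∧ dist x4 x1 = r4 + r1 ∧ dist x4 x2 = r4 + r2 ∧ dist x4 x3 = r4 + r3)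
        ∨ (k = -(1 / r4) ∧ dist x4 x1 = r4 - r1 ∧ dist x4 x2 = r4 - r2 ∧
            dist x4 x3 = r4 - r3)) :
    k = k1 + k2 + k3 + 2 * Real.sqrt (k1 * k2 + k2 * k3 + k3 * k1) ∨
      k = k1 + k2 + k3 - 2 * Real.sqrt (k1 * k2 + k2 * k3 + k3 * k1) := by
  have e12 : (x1 0 - x2 0) ^ 2 + (x1 1 - x2 1) ^ 2 = (r1 + r2) ^ 2 := by
    rw [← dist_sq_coords, h12]
  have e13 : (x1 0 - x3 0) ^ 2 + (x1 1 - x3 1) ^ 2 = (r1 + r3) ^ 2 := by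
    rw [← dist_sq_coords, h13]
  have e23 : (x2 0 - x3 0) ^ 2 + (x2 1 - x3 1) ^ 2 = (r2 + r3) ^ 2 := by
    rw [← dist_sq_coords, h23]
  rcases h4 with ⟨hk, h41, h42, h43⟩ | ⟨hk, h41, h42, h43⟩
  · refine descartes_main x1 x2 x3 x4 r1 r2 r3 r4 k1 k2 k3 k hr1 hr2 hr3 hr4.ne'
      hk1 hk2 hk3 hk e12 e13 e23 ?_ ?_ ?_
    · rw [← dist_sq_coords, h41]
    · rw [← dist_sq_coords, h42]
    · rw [← dist_sq_coords, h43]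
  · refine descartes_main x1 x2 x3 x4 r1 r2 r3 (-r4) k1 k2 k3 k hr1 hr2 hr3
      (neg_ne_zero.2 hr4.ne') hk1 hk2 hk3 (by rw [hk]; field_simp) e12 e13 e23 ?_ ?_ ?_
    · rw [← dist_sq_coords, h41]; ring
    · rw [← dist_sq_coords, h42]; ring
    · rw [← dist_sq_coords, h43]; ring
end

section
/- Let v ∈ ℝ³ be a covered vertex of a covering sphere packing with polyhedron P_v whose faces Q_{v u_1}, ..., Q_{v u_n} lie in the common tangent planes to the neighbors u_1, ..., u_n, so that the outward unit normal of Q_{v u_i} is (u_i − v)/‖u_i − v‖. Define weights c_{v u_i} = Area(Q_{v u_i})/‖u_i − v‖ and π(v) = Σ_i c_{v u_i}. Then Σ_{i=1}^n (c_{v u_i}/π(v)) (u_i − v) = 0; hence the weighted random walk on the sphere centers is a martingale. -/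
open MeasureTheory RealInnerProductSpace

/-!
Translating the polyhedron `P` by a vector `w` does not change its volume. To first order the
translate gains a slab of thickness `⟪N j, w⟫` over every face `Q j` with `⟪N j, w⟫ > 0` and
loses one over every face with `⟪N j, w⟫ < 0`, and by Cavalieri's principle such a slab has
volume `thickness * Area(Q j)`. Hence `∑ j, ⟪N j, w⟫ * Area(Q j) = 0` for every `w`, i.e.
`∑ j, Area(Q j) • N j = 0`; since `c i • (u i - v) = Area(Q i) • N i`, this is the claim.

To make "first order" precise, the slabs are compared with right cylinders over the faces with
the other constraints relaxed by `±δ`. As `δ → 0` the areas of these relaxed faces tend to the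
areas of the faces: from above by continuity of measure, from below because two distinct faces
meet in a set of zero area.
-/

open Set Filter Topology Module Bornology Function
open scoped Pointwise

section Geometry

variable {V : Type*} [NormedAddCommGroup V] [InnerProductSpace ℝ V]

theorem inner_add_smul_le {μ ν : V} (hμ : ‖μ‖ = 1) (hν : ‖ν‖ = 1) (x : V) (r : ℝ) :
    ⟪μ, x + r • ν⟫ ≤ ⟪μ, x⟫ + |r| := by
  have h : |⟪μ, ν⟫| ≤ 1 := (abs_real_inner_le_norm μ ν).trans_eq (by rw [hμ, hν, one_mul])
  rw [inner_add_right, real_inner_smul_right]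
  gcongr
  calc r * ⟪μ, ν⟫ ≤ |r| * |⟪μ, ν⟫| := (le_abs_self _).trans_eq (abs_mul _ _)
    _ ≤ |r| := mul_le_of_le_one_right (abs_nonneg r) h

/-- For a unit vector `ν`, the right cylinder with base `F ∩ {x | ⟪ν, x⟫ = c}` and heights
`⟪ν, x⟫ ∈ I`; `x + (c - ⟪ν, x⟫) • ν` is the orthogonal projection of `x` onto the base plane. -/
def rightCylinder (ν : V) (c : ℝ) (F : Set V) (I : Set ℝ) : Set V :=
  {x | ⟪ν, x⟫ ∈ I ∧ x + (c - ⟪ν, x⟫) • ν ∈ F}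

variable {ι : Type*}

def polyhedron (N : ι → V) (d : ι → ℝ) : Set V :=
  ⋂ i, {x | ⟪N i, x⟫ ≤ d i}

def face (N : ι → V) (d : ι → ℝ) (j : ι) : Set V :=
  polyhedron N d ∩ {x | ⟪N j, x⟫ = d j}

def relaxedFace (N : ι → V) (d : ι → ℝ) (j : ι) (ε : ℝ) : Set V :=
  {x | ∀ k ≠ j, ⟪N k, x⟫ ≤ d k + ε} ∩ {x | ⟪N j, x⟫ = d j}

variable {N : ι → V} {d : ι → ℝ}

theorem relaxedFace_zero (j : ι) : relaxedFace N d j 0 = face N d j := by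
  ext x
  simp only [relaxedFace, face, polyhedron, mem_inter_iff, mem_iInter, mem_ofPred_eq, add_zero]
  refine ⟨fun ⟨h, hj⟩ => ⟨fun k => ?_, hj⟩, fun ⟨h, hj⟩ => ⟨fun k _ => h k, hj⟩⟩
  rcases eq_or_ne k j with rfl | hk
  exacts [hj.le, h k hk]

theorem relaxedFace_mono (j : ι) : Monotone (relaxedFace N d j) :=
  fun _ _ hε _ ⟨hx, hj⟩ => ⟨fun k hk => (hx k hk).trans (by linarith), hj⟩

theorem relaxedFace_subset_polyhedron (j : ι) (ε : ℝ) :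
    relaxedFace N d j ε ⊆ polyhedron N fun i => d i + |ε| := by
  rintro x ⟨hx, hj⟩
  refine mem_iInter.2 fun k => ?_
  rcases eq_or_ne k j with rfl | hk
  · exact (le_of_eq hj).trans (le_add_of_nonneg_right (abs_nonneg ε))
  · exact (hx k hk).trans (by linarith [le_abs_self ε])

theorem isClosed_setOf_forall_ne_inner_le (j : ι) (e : ι → ℝ) :
    IsClosed {x : V | ∀ k ≠ j, ⟪N k, x⟫ ≤ e k} := by
  simp only [ofPred_forall]
  exact isClosed_iInter fun k => isClosed_iInter fun _ =>
    isClosed_le (continuous_const.inner continuous_id) continuous_const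

theorem isClosed_polyhedron : IsClosed (polyhedron N d) :=
  isClosed_iInter fun _ => isClosed_le (continuous_const.inner continuous_id) continuous_const

theorem isClosed_relaxedFace (j : ι) (ε : ℝ) : IsClosed (relaxedFace N d j ε) :=
  (isClosed_setOf_forall_ne_inner_le j _).inter
    (isClosed_eq (continuous_const.inner continuous_id) continuous_const)

theorem vadd_polyhedron (v : V) :
    v +ᵥ polyhedron N d = polyhedron N fun i => d i + ⟪N i, v⟫ := by
  ext x
  simp only [mem_vadd_set_iff_neg_vadd_mem, polyhedron, mem_iInter, mem_ofPred_eq, vadd_eq_add,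
    inner_add_right, inner_neg_right]
  exact forall_congr' fun i => by constructor <;> intro h <;> linarith

theorem exists_add_le_of_mem_interior (hN : ∀ i, ‖N i‖ = 1) {x₀ : V}
    (hx₀ : x₀ ∈ interior (polyhedron N d)) : ∃ ρ > 0, ∀ i, ⟪N i, x₀⟫ + ρ ≤ d i := by
  obtain ⟨ρ, hρ, hball⟩ := Metric.nhds_basis_closedBall.mem_iff.1 (mem_interior_iff_mem_nhds.1 hx₀)
  refine ⟨ρ, hρ, fun i => ?_⟩
  have hmem : x₀ + ρ • N i ∈ polyhedron N d :=
    hball (by simp [dist_eq_norm, norm_smul, hN i, abs_of_pos hρ])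
  have h := mem_iInter.1 hmem i
  rwa [mem_ofPred_eq, inner_add_right, real_inner_smul_right, real_inner_self_eq_norm_sq, hN i,
    one_pow, mul_one] at h

theorem isBounded_polyhedron_add (hb : IsBounded (polyhedron N d)) {x₀ : V} {ρ : ℝ} (hρ : 0 < ρ)
    (hx₀ : ∀ i, ⟪N i, x₀⟫ + ρ ≤ d i) {ε : ℝ} (hε : 0 ≤ ε) :
    IsBounded (polyhedron N fun i => d i + ε) := by
  obtain ⟨R, hR⟩ := isBounded_iff_forall_norm_le.1 hb
  set θ := ρ / (ρ + ε)
  have hθ : 0 < θ := by positivity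
  refine isBounded_iff_forall_norm_le.2 ⟨‖x₀‖ + θ⁻¹ * (R + ‖x₀‖), fun y hy => ?_⟩
  have hz : x₀ + θ • (y - x₀) ∈ polyhedron N d := by
    refine mem_iInter.2 fun i => ?_
    have hy := mem_iInter.1 hy i
    simp only [mem_ofPred_eq, inner_add_right, real_inner_smul_right, inner_sub_right] at hy ⊢
    have hθε : θ * (ρ + ε) = ρ := div_mul_cancel₀ ρ (by positivity)
    nlinarith [hx₀ i, div_le_one_of_le₀ (by linarith : ρ ≤ ρ + ε) (by positivity : 0 ≤ ρ + ε)]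
  calc ‖y‖ = ‖x₀ + θ⁻¹ • ((x₀ + θ • (y - x₀)) - x₀)‖ := by
        rw [add_sub_cancel_left, smul_smul, inv_mul_cancel₀ hθ.ne', one_smul, add_sub_cancel]
    _ ≤ ‖x₀‖ + θ⁻¹ * (R + ‖x₀‖) := by
        refine (norm_add_le _ _).trans (add_le_add le_rfl ?_)
        rw [norm_smul, Real.norm_of_nonneg (inv_nonneg.2 hθ.le)]
        exact mul_le_mul_of_nonneg_left ((norm_sub_le _ _).trans (add_le_add (hR _ hz) le_rfl))
          (inv_nonneg.2 hθ.le)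

theorem polyhedron_add_inner_diff_subset (hN : ∀ i, ‖N i‖ = 1) {w : V} {δ : ℝ}
    (hδ : 2 * ‖w‖ ≤ δ) :
    (polyhedron N fun i => d i + ⟪N i, w⟫) \ polyhedron N d ⊆
      ⋃ j, rightCylinder (N j) (d j) {x | ∀ k ≠ j, ⟪N k, x⟫ ≤ d k + δ}
        (Ioc (d j) (d j + ⟪N j, w⟫)) := by
  rintro x ⟨hxS, hxP⟩
  obtain ⟨j, hj⟩ : ∃ j, d j < ⟪N j, x⟫ := by simpa [polyhedron] using hxP
  have hS := mem_iInter.1 hxS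
  have hjw : ⟪N j, x⟫ ≤ d j + ⟪N j, w⟫ := hS j
  refine mem_iUnion.2 ⟨j, ⟨hj, hjw⟩, fun k _ => ?_⟩
  have hkw : ⟪N k, w⟫ ≤ ‖w‖ := (real_inner_le_norm _ _).trans_eq (by rw [hN k, one_mul])
  have hjw' : ⟪N j, w⟫ ≤ ‖w‖ := (real_inner_le_norm _ _).trans_eq (by rw [hN j, one_mul])
  have hk : ⟪N k, x⟫ ≤ d k + ⟪N k, w⟫ := hS k
  calc ⟪N k, x + (d j - ⟪N j, x⟫) • N j⟫ ≤ ⟪N k, x⟫ + |d j - ⟪N j, x⟫| :=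
        inner_add_smul_le (hN k) (hN j) x _
    _ ≤ d k + δ := by rw [abs_of_neg (by linarith)]; linarith

theorem inner_le_of_mem_rightCylinder (hN : ∀ i, ‖N i‖ = 1) {w : V} {δ : ℝ} (hδ : 2 * ‖w‖ ≤ δ)
    {j k : ι} (hkj : k ≠ j) {x : V}
    (hx : x ∈ rightCylinder (N j) (d j) {x | ∀ k ≠ j, ⟪N k, x⟫ ≤ d k + -δ}
      (Ioc (d j + ⟪N j, w⟫) (d j))) :
    ⟪N k, x⟫ ≤ d k - ‖w‖ := by
  obtain ⟨⟨hlo, hhi⟩, hF⟩ := hx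
  have hjw : -⟪N j, w⟫ ≤ ‖w‖ := by
    rw [← inner_neg_right]
    exact (real_inner_le_norm _ _).trans_eq (by rw [hN j, one_mul, norm_neg])
  have hx : x = x + (d j - ⟪N j, x⟫) • N j + (-(d j - ⟪N j, x⟫)) • N j := by module
  calc ⟪N k, x⟫ ≤ ⟪N k, x + (d j - ⟪N j, x⟫) • N j⟫ + |-(d j - ⟪N j, x⟫)| := by
        conv_lhs => rw [hx]
        exact inner_add_smul_le (hN k) (hN j) _ _
    _ ≤ d k - ‖w‖ := by
        rw [abs_of_nonpos (by linarith)]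
        linarith [hF k hkj]

theorem rightCylinder_subset_polyhedron_diff (hN : ∀ i, ‖N i‖ = 1) {w : V} {δ : ℝ}
    (hδ : 2 * ‖w‖ ≤ δ) (j : ι) :
    rightCylinder (N j) (d j) {x | ∀ k ≠ j, ⟪N k, x⟫ ≤ d k + -δ} (Ioc (d j + ⟪N j, w⟫) (d j)) ⊆
      polyhedron N d \ polyhedron N fun i => d i + ⟪N i, w⟫ := by
  intro x hx
  refine ⟨mem_iInter.2 fun k => ?_, fun hS => ?_⟩
  · rcases eq_or_ne k j with rfl | hkj
    · exact hx.1.2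
    · exact (inner_le_of_mem_rightCylinder hN hδ hkj hx).trans (by linarith [norm_nonneg w])
  · exact (mem_iInter.1 hS j).not_gt hx.1.1

theorem pairwise_disjoint_rightCylinder (hN : ∀ i, ‖N i‖ = 1) {w : V} {δ : ℝ}
    (hδ : 2 * ‖w‖ ≤ δ) :
    Pairwise (Disjoint on fun j => rightCylinder (N j) (d j)
      {x | ∀ k ≠ j, ⟪N k, x⟫ ≤ d k + -δ} (Ioc (d j + ⟪N j, w⟫) (d j))) := by
  intro j k hjk
  refine Set.disjoint_left.2 fun x hxj hxk => ?_
  have hkw : -‖w‖ ≤ ⟪N k, w⟫ := by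
    have := abs_le.1 ((abs_real_inner_le_norm (N k) w).trans_eq (by rw [hN k, one_mul]))
    exact this.1
  linarith [inner_le_of_mem_rightCylinder hN hδ hjk.symm hxj, hxk.1.1]

theorem face_subset_iUnion_relaxedFace_union [Finite ι] (j : ι) :
    face N d j ⊆ (⋃ n : ℕ, relaxedFace N d j (-(1 / (n + 1)))) ∪
      ⋃ k ∈ ({j}ᶜ : Set ι), {x | ⟪N k, x⟫ = d k} ∩ {x | ⟪N j, x⟫ = d j} := by
  rw [← relaxedFace_zero]
  rintro x ⟨hx, hj⟩
  by_cases hk : ∃ k ≠ j, ⟪N k, x⟫ = d k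
  · obtain ⟨k, hkj, hk⟩ := hk
    exact Or.inr (mem_biUnion (s := {j}ᶜ) hkj ⟨hk, hj⟩)
  push Not at hk
  have hev : ∀ᶠ n : ℕ in atTop, ∀ k, k ≠ j → ⟪N k, x⟫ ≤ d k + -(1 / (n + 1)) := by
    refine eventually_all.2 fun k => ?_
    by_cases hkj : k = j
    · exact Eventually.of_forall fun _ h => absurd hkj h
    have hlt : ⟪N k, x⟫ < d k := lt_of_le_of_ne (by simpa using hx k hkj) (hk k hkj)
    have hlim : Tendsto (fun n : ℕ => d k + -(1 / ((n : ℝ) + 1))) atTop (𝓝 (d k)) := by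
      simpa using (tendsto_const_nhds (x := d k)).add
        (tendsto_one_div_add_atTop_nhds_zero_nat (𝕜 := ℝ)).neg
    exact (hlim.eventually (lt_mem_nhds hlt)).mono fun _ h _ => h.le
  obtain ⟨n, hn⟩ := hev.exists
  exact Or.inl (mem_iUnion.2 ⟨n, hn, hj⟩)

end Geometry

section Measure

variable {V : Type*} [NormedAddCommGroup V] [InnerProductSpace ℝ V] [MeasurableSpace V]
  [BorelSpace V]

theorem measurableSet_rightCylinder (ν : V) (c : ℝ) {F : Set V} {I : Set ℝ}
    (hF : MeasurableSet F) (hI : MeasurableSet I) : MeasurableSet (rightCylinder ν c F I) := by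
  have hinner : Continuous fun x : V => ⟪ν, x⟫ := continuous_const.inner continuous_id
  exact (hinner.measurable hI).inter
    ((continuous_id.add ((continuous_const.sub hinner).smul continuous_const)).measurable hF)

theorem euclideanHausdorffMeasure_rightCylinder_inter_hyperplane {ν : V} (hν : ‖ν‖ = 1) (k : ℕ)
    (c s : ℝ) (F : Set V) (I : Set ℝ) :
    μHE[k] (rightCylinder ν c F I ∩ {x | ⟪ν, x⟫ = s}) =
      I.indicator (fun _ => μHE[k] (F ∩ {x | ⟪ν, x⟫ = c})) s := by
  have hνν : ⟪ν, ν⟫ = 1 := by rw [real_inner_self_eq_norm_sq, hν, one_pow]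
  by_cases hs : s ∈ I
  · rw [indicator_of_mem hs, ← measure_vadd _ ((s - c) • ν) (F ∩ {x | ⟪ν, x⟫ = c})]
    congr 1
    ext x
    simp only [rightCylinder, mem_inter_iff, mem_ofPred_eq, mem_vadd_set_iff_neg_vadd_mem,
      vadd_eq_add, inner_add_right, inner_neg_right, real_inner_smul_right, hνν]
    constructor
    · rintro ⟨⟨-, hF⟩, rfl⟩
      exact ⟨by convert hF using 1; module, by ring⟩
    · rintro ⟨hF, h⟩
      have hx : ⟪ν, x⟫ = s := by linarith
      exact ⟨⟨hx ▸ hs, by convert hF using 1; rw [hx]; module⟩, hx⟩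
  · rw [indicator_of_notMem hs]
    convert measure_empty (μ := (μHE[k] : Measure V))
    ext x
    simp only [rightCylinder, mem_inter_iff, mem_ofPred_eq, mem_empty_iff_false, iff_false]
    rintro ⟨⟨h, -⟩, rfl⟩
    exact hs h

variable [FiniteDimensional ℝ V]

theorem volume_rightCylinder {ν : V} (hν : ‖ν‖ = 1) (c : ℝ) {F : Set V} {I : Set ℝ}
    (hF : MeasurableSet F) (hI : MeasurableSet I) :
    volume (rightCylinder ν c F I) = volume I * μHE[finrank ℝ V - 1] (F ∩ {x | ⟪ν, x⟫ = c}) := by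
  have hν0 : ν ≠ 0 := by rintro rfl; simp at hν
  have hslice (s : ℝ) : AffineSubspace.mk' (s • ν +ᵥ (0 : V)) (ℝ ∙ ν)ᗮ = {x | ⟪ν, x⟫ = s} := by
    ext x
    simp [AffineSubspace.mem_mk', Submodule.mem_orthogonal_singleton_iff_inner_right,
      inner_sub_right, real_inner_smul_right, hν, sub_eq_zero]
  rw [← InnerProductSpace.euclideanHausdorffMeasure_eq_volume,
    EuclideanGeometry.euclideanHausdorffMeasure_eq_lintegral (0 : V) hν0
      (measurableSet_rightCylinder ν c hF hI)]
  simp_rw [hslice, euclideanHausdorffMeasure_rightCylinder_inter_hyperplane hν]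
  rw [lintegral_indicator_const hI, ← ofReal_norm, hν, ENNReal.ofReal_one, one_mul, mul_comm]

theorem volume_hyperplane {m : V} (hm : m ≠ 0) (r : ℝ) : volume {x : V | ⟪m, x⟫ = r} = 0 := by
  have hν : ‖‖m‖⁻¹ • m‖ = 1 := norm_smul_inv_norm hm
  have hset : {x : V | ⟪m, x⟫ = r} = rightCylinder (‖m‖⁻¹ • m) 0 univ {‖m‖⁻¹ * r} := by
    ext x
    simp [rightCylinder, real_inner_smul_left, hm]
  rw [hset, volume_rightCylinder hν 0 MeasurableSet.univ (measurableSet_singleton _),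
    Real.volume_singleton, zero_mul]

theorem euclideanHausdorffMeasure_hyperplane_inter_hyperplane {μ ν : V} (hν : ‖ν‖ = 1)
    (hμ : μ ∉ ℝ ∙ ν) (c c' : ℝ) :
    μHE[finrank ℝ V - 1] ({x | ⟪μ, x⟫ = c'} ∩ {x | ⟪ν, x⟫ = c}) = 0 := by
  have hm : μ - ⟪μ, ν⟫ • ν ≠ 0 := fun h =>
    hμ (Submodule.mem_span_singleton.2 ⟨⟪μ, ν⟫, (sub_eq_zero.1 h).symm⟩)
  have hsub : rightCylinder ν c {x | ⟪μ, x⟫ = c'} (Ioc 0 1) ⊆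
      {x | ⟪μ - ⟪μ, ν⟫ • ν, x⟫ = c' - c * ⟪μ, ν⟫} := by
    rintro x ⟨-, hx⟩
    simp only [mem_ofPred_eq, inner_add_right, real_inner_smul_right] at hx ⊢
    rw [inner_sub_left, real_inner_smul_left, ← hx, real_inner_comm ν μ]
    ring
  have h := measure_mono_null hsub (volume_hyperplane hm _)
  rwa [volume_rightCylinder hν c (measurableSet_eq_fun (by fun_prop) measurable_const)
    measurableSet_Ioc, Real.volume_Ioc, sub_zero, ENNReal.ofReal_one, one_mul] at h

theorem euclideanHausdorffMeasure_inter_hyperplane_ne_top {ν : V} (hν : ‖ν‖ = 1) {c : ℝ}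
    {F : Set V} (hF : MeasurableSet F) (hb : IsBounded (F ∩ {x | ⟪ν, x⟫ = c})) :
    μHE[finrank ℝ V - 1] (F ∩ {x | ⟪ν, x⟫ = c}) ≠ ⊤ := by
  obtain ⟨R, hR⟩ := isBounded_iff_forall_norm_le.1 hb
  have hcyl : IsBounded (rightCylinder ν c F (Ioc 0 1)) := by
    refine isBounded_iff_forall_norm_le.2 ⟨R + (|c| + 1), fun x ⟨hx, hxF⟩ => ?_⟩
    have hproj := hR _ ⟨hxF, by simp [inner_add_right, real_inner_smul_right, hν]⟩
    have hr : ‖(c - ⟪ν, x⟫) • ν‖ ≤ |c| + 1 := by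
      rw [norm_smul, hν, mul_one, Real.norm_eq_abs]
      exact (abs_sub _ _).trans (add_le_add le_rfl (by rw [abs_of_pos hx.1]; exact hx.2))
    calc ‖x‖ = ‖(x + (c - ⟪ν, x⟫) • ν) - (c - ⟪ν, x⟫) • ν‖ := by rw [add_sub_cancel_right]
      _ ≤ R + (|c| + 1) := (norm_sub_le _ _).trans (add_le_add hproj hr)
  have h := hcyl.measure_lt_top (μ := volume)
  rwa [volume_rightCylinder hν c hF measurableSet_Ioc, Real.volume_Ioc, sub_zero,
    ENNReal.ofReal_one, one_mul, lt_top_iff_ne_top] at h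

variable {ι : Type*} {N : ι → V} {d : ι → ℝ}

theorem euclideanHausdorffMeasure_relaxedFace_ne_top (hN : ∀ i, ‖N i‖ = 1)
    (hb : IsBounded (polyhedron N d)) {x₀ : V} {ρ : ℝ} (hρ : 0 < ρ)
    (hx₀ : ∀ i, ⟪N i, x₀⟫ + ρ ≤ d i) (j : ι) (ε : ℝ) :
    μHE[finrank ℝ V - 1] (relaxedFace N d j ε) ≠ ⊤ :=
  euclideanHausdorffMeasure_inter_hyperplane_ne_top (hN j)
    (isClosed_setOf_forall_ne_inner_le j _).measurableSet
    ((isBounded_polyhedron_add hb hρ hx₀ (abs_nonneg ε)).subset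
      (relaxedFace_subset_polyhedron j ε))

theorem tendsto_euclideanHausdorffMeasure_relaxedFace_pos (hN : ∀ i, ‖N i‖ = 1)
    (hb : IsBounded (polyhedron N d)) {x₀ : V} {ρ : ℝ} (hρ : 0 < ρ)
    (hx₀ : ∀ i, ⟪N i, x₀⟫ + ρ ≤ d i) (j : ι) :
    Tendsto (fun n : ℕ => μHE[finrank ℝ V - 1] (relaxedFace N d j (1 / (n + 1)))) atTop
      (𝓝 (μHE[finrank ℝ V - 1] (face N d j))) := by
  have hinter : ⋂ n : ℕ, relaxedFace N d j (1 / (n + 1)) = face N d j := by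
    rw [← relaxedFace_zero]
    refine Subset.antisymm (fun x hx => ⟨fun k hk => ?_, (mem_iInter.1 hx 0).2⟩)
      (subset_iInter fun n => relaxedFace_mono j (by positivity))
    refine ge_of_tendsto' (tendsto_const_nhds.add tendsto_one_div_add_atTop_nhds_zero_nat)
      fun n => (mem_iInter.1 hx n).1 k hk
  rw [← hinter]
  exact tendsto_measure_iInter_atTop (fun n => (isClosed_relaxedFace j _).nullMeasurableSet)
    (fun n m hnm => relaxedFace_mono j (Nat.one_div_le_one_div hnm))
    ⟨0, euclideanHausdorffMeasure_relaxedFace_ne_top hN hb hρ hx₀ j _⟩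

theorem euclideanHausdorffMeasure_hyperplane_inter_hyperplane_of_ne (hN : ∀ i, ‖N i‖ = 1)
    (hinj : Injective fun i => (N i, d i)) {x₀ : V} (hx₀ : ∀ i, ⟪N i, x₀⟫ < d i) {j k : ι}
    (hkj : k ≠ j) :
    μHE[finrank ℝ V - 1] ({x | ⟪N k, x⟫ = d k} ∩ {x | ⟪N j, x⟫ = d j}) = 0 := by
  by_cases hspan : N k ∈ ℝ ∙ N j
  -- Parallel planes: with equal normals they differ by injectivity, and with opposite normals
  -- they could only meet if the polyhedron had no interior point.
  · obtain ⟨a, ha⟩ := Submodule.mem_span_singleton.1 hspan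
    have habs : |a| = 1 := by simpa [← ha, norm_smul, hN j] using hN k
    convert measure_empty (μ := (μHE[finrank ℝ V - 1] : Measure V))
    refine eq_empty_of_forall_notMem fun x ⟨hxk, hxj⟩ => ?_
    simp only [mem_ofPred_eq] at hxk hxj
    rcases abs_eq (zero_le_one' ℝ) |>.1 habs with rfl | rfl
    · rw [one_smul] at ha
      exact hkj (hinj (Prod.ext ha.symm (show d k = d j by rw [← hxk, ← hxj, ha])))
    · have := hx₀ k
      rw [← ha, neg_one_smul, inner_neg_left, ← hxk, ← ha, neg_one_smul, inner_neg_left] at this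
      linarith [hx₀ j]
  · exact euclideanHausdorffMeasure_hyperplane_inter_hyperplane (hN j) hspan _ _

variable [Fintype ι]

/-- Translating `polyhedron N d` by `w` preserves its volume; the cylinders over the `(-δ)`-relaxed
faces lie in the part it loses, and those over the `δ`-relaxed faces cover the part it gains. -/
theorem sum_ofReal_neg_inner_mul_le_of_two_mul_norm_le (hN : ∀ i, ‖N i‖ = 1)
    (hb : IsBounded (polyhedron N d)) {w : V} {δ : ℝ} (hδ : 2 * ‖w‖ ≤ δ) :
    ∑ j, ENNReal.ofReal (-⟪N j, w⟫) * μHE[finrank ℝ V - 1] (relaxedFace N d j (-δ)) ≤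
      ∑ j, ENNReal.ofReal ⟪N j, w⟫ * μHE[finrank ℝ V - 1] (relaxedFace N d j δ) := by
  set P := polyhedron N d
  set S := polyhedron N fun i => d i + ⟪N i, w⟫
  have hmeas (j : ι) (ε : ℝ) : MeasurableSet {x | ∀ k ≠ j, ⟪N k, x⟫ ≤ d k + ε} :=
    (isClosed_setOf_forall_ne_inner_le j _).measurableSet
  have hSP : volume S = volume P := by
    rw [show S = w +ᵥ P from (vadd_polyhedron w).symm, measure_vadd]
  calc ∑ j, ENNReal.ofReal (-⟪N j, w⟫) * μHE[finrank ℝ V - 1] (relaxedFace N d j (-δ))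
      = ∑ j, volume (rightCylinder (N j) (d j) {x | ∀ k ≠ j, ⟪N k, x⟫ ≤ d k + -δ}
          (Ioc (d j + ⟪N j, w⟫) (d j))) := by
        refine Finset.sum_congr rfl fun j _ => ?_
        rw [volume_rightCylinder (hN j) _ (hmeas j _) measurableSet_Ioc, Real.volume_Ioc,
          sub_add_cancel_left]
        rfl
    _ = volume (⋃ j, rightCylinder (N j) (d j) {x | ∀ k ≠ j, ⟪N k, x⟫ ≤ d k + -δ}
          (Ioc (d j + ⟪N j, w⟫) (d j))) := by
        rw [measure_iUnion (pairwise_disjoint_rightCylinder hN hδ)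
          fun j => measurableSet_rightCylinder _ _ (hmeas j _) measurableSet_Ioc, tsum_fintype]
    _ ≤ volume (P \ S) := measure_mono (iUnion_subset (rightCylinder_subset_polyhedron_diff hN hδ))
    _ = volume (S \ P) :=
        measure_sdiff_symm isClosed_polyhedron.measurableSet.nullMeasurableSet
          isClosed_polyhedron.measurableSet.nullMeasurableSet hSP.symm
          (measure_mono inter_subset_left |>.trans_lt hb.measure_lt_top).ne
    _ ≤ ∑ j, volume (rightCylinder (N j) (d j) {x | ∀ k ≠ j, ⟪N k, x⟫ ≤ d k + δ}
          (Ioc (d j) (d j + ⟪N j, w⟫))) :=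
        (measure_mono (polyhedron_add_inner_diff_subset hN hδ)).trans
          (measure_iUnion_fintype_le _ _)
    _ = ∑ j, ENNReal.ofReal ⟪N j, w⟫ * μHE[finrank ℝ V - 1] (relaxedFace N d j δ) := by
        refine Finset.sum_congr rfl fun j _ => ?_
        rw [volume_rightCylinder (hN j) _ (hmeas j _) measurableSet_Ioc, Real.volume_Ioc,
          add_sub_cancel_left]
        rfl

theorem sum_ofReal_neg_inner_mul_le (hN : ∀ i, ‖N i‖ = 1) (hb : IsBounded (polyhedron N d)) (w : V)
    {δ : ℝ} (hδ : 0 < δ) :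
    ∑ j, ENNReal.ofReal (-⟪N j, w⟫) * μHE[finrank ℝ V - 1] (relaxedFace N d j (-δ)) ≤
      ∑ j, ENNReal.ofReal ⟪N j, w⟫ * μHE[finrank ℝ V - 1] (relaxedFace N d j δ) := by
  set t := δ / (2 * ‖w‖ + 1)
  have ht : 0 < t := by positivity
  have htw : 2 * ‖t • w‖ ≤ δ := by
    rw [norm_smul, Real.norm_of_nonneg ht.le, ← mul_assoc, mul_comm 2, mul_assoc,
      div_mul_eq_mul_div, div_le_iff₀ (by positivity)]
    nlinarith [norm_nonneg w]
  have h := sum_ofReal_neg_inner_mul_le_of_two_mul_norm_le hN hb htw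
  simp only [real_inner_smul_right, ← mul_neg, ENNReal.ofReal_mul ht.le, mul_assoc,
    ← Finset.mul_sum] at h
  exact (ENNReal.mul_le_mul_iff_right (by simpa using ht) ENNReal.ofReal_ne_top).1 h

theorem tendsto_euclideanHausdorffMeasure_relaxedFace_neg (hN : ∀ i, ‖N i‖ = 1)
    (hinj : Injective fun i => (N i, d i)) {x₀ : V} (hx₀ : ∀ i, ⟪N i, x₀⟫ < d i) (j : ι) :
    Tendsto (fun n : ℕ => μHE[finrank ℝ V - 1] (relaxedFace N d j (-(1 / (n + 1))))) atTop
      (𝓝 (μHE[finrank ℝ V - 1] (face N d j))) := by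
  have hunion : μHE[finrank ℝ V - 1] (⋃ n : ℕ, relaxedFace N d j (-(1 / (n + 1)))) =
      μHE[finrank ℝ V - 1] (face N d j) := by
    refine le_antisymm (measure_mono (iUnion_subset fun n => ?_)) ?_
    · exact relaxedFace_zero (N := N) (d := d) j ▸ relaxedFace_mono j (by simp; positivity)
    calc μHE[finrank ℝ V - 1] (face N d j)
        ≤ μHE[finrank ℝ V - 1] (⋃ n : ℕ, relaxedFace N d j (-(1 / (n + 1)))) +
          μHE[finrank ℝ V - 1]
            (⋃ k ∈ ({j}ᶜ : Set ι), {x | ⟪N k, x⟫ = d k} ∩ {x | ⟪N j, x⟫ = d j}) :=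
          (measure_mono (face_subset_iUnion_relaxedFace_union j)).trans (measure_union_le _ _)
      _ = μHE[finrank ℝ V - 1] (⋃ n : ℕ, relaxedFace N d j (-(1 / (n + 1)))) := by
          rw [(measure_biUnion_null_iff (I := {j}ᶜ) (to_countable _)).2 fun k hk =>
            euclideanHausdorffMeasure_hyperplane_inter_hyperplane_of_ne hN hinj hx₀ hk, add_zero]
  rw [← hunion]
  exact tendsto_measure_iUnion_atTop
    fun n m hnm => relaxedFace_mono j (neg_le_neg (Nat.one_div_le_one_div hnm))

theorem sum_inner_mul_toReal_nonneg (hN : ∀ i, ‖N i‖ = 1) (hinj : Injective fun i => (N i, d i))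
    (hb : IsBounded (polyhedron N d)) (hint : (interior (polyhedron N d)).Nonempty) (w : V) :
    0 ≤ ∑ j, ⟪N j, w⟫ * (μHE[finrank ℝ V - 1] (face N d j)).toReal := by
  obtain ⟨x₀, hx₀⟩ := hint
  obtain ⟨ρ, hρ, hmargin⟩ := exists_add_le_of_mem_interior hN hx₀
  have hA (j : ι) : μHE[finrank ℝ V - 1] (face N d j) ≠ ⊤ := by
    rw [← relaxedFace_zero]
    exact euclideanHausdorffMeasure_relaxedFace_ne_top hN hb hρ hmargin j 0
  set A := fun j => μHE[finrank ℝ V - 1] (face N d j)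
  have hfin (a : ℝ) (j : ι) : ENNReal.ofReal a * A j ≠ ⊤ :=
    ENNReal.mul_ne_top ENNReal.ofReal_ne_top (hA j)
  have hle : ∑ j, ENNReal.ofReal (-⟪N j, w⟫) * A j ≤ ∑ j, ENNReal.ofReal ⟪N j, w⟫ * A j :=
    le_of_tendsto_of_tendsto'
      (tendsto_finsetSum _ fun j _ => ENNReal.Tendsto.const_mul
        (tendsto_euclideanHausdorffMeasure_relaxedFace_neg hN hinj
          (fun i => by linarith [hmargin i]) j) (Or.inr ENNReal.ofReal_ne_top))
      (tendsto_finsetSum _ fun j _ => ENNReal.Tendsto.const_mul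
        (tendsto_euclideanHausdorffMeasure_relaxedFace_pos hN hb hρ hmargin j)
        (Or.inr ENNReal.ofReal_ne_top))
      fun n => sum_ofReal_neg_inner_mul_le hN hb w (by positivity)
  have hreal := ENNReal.toReal_mono (ENNReal.sum_ne_top.2 fun j _ => hfin _ j) hle
  simp only [ENNReal.toReal_sum fun j _ => hfin _ j, ENNReal.toReal_mul,
    ENNReal.toReal_ofReal'] at hreal
  calc 0 ≤ ∑ j, max ⟪N j, w⟫ 0 * (A j).toReal - ∑ j, max (-⟪N j, w⟫) 0 * (A j).toReal :=
        sub_nonneg.2 hreal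
    _ = ∑ j, ⟪N j, w⟫ * (A j).toReal := by
        rw [← Finset.sum_sub_distrib]
        simp_rw [← sub_mul, max_zero_sub_max_neg_zero_eq_self]

theorem sum_toReal_euclideanHausdorffMeasure_face_smul_eq_zero (hN : ∀ i, ‖N i‖ = 1)
    (hinj : Injective fun i => (N i, d i)) (hb : IsBounded (polyhedron N d))
    (hint : (interior (polyhedron N d)).Nonempty) :
    ∑ j, (μHE[finrank ℝ V - 1] (face N d j)).toReal • N j = 0 := by
  obtain ⟨W, hW⟩ : ∃ W, W = ∑ j, (μHE[finrank ℝ V - 1] (face N d j)).toReal • N j := ⟨_, rfl⟩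
  rw [← hW]
  have hWW : ∑ j, ⟪N j, -W⟫ * (μHE[finrank ℝ V - 1] (face N d j)).toReal = -‖W‖ ^ 2 := by
    have hself : ⟪W, W⟫ = ∑ j, (μHE[finrank ℝ V - 1] (face N d j)).toReal * ⟪N j, W⟫ := by
      rw [hW, sum_inner]
      simp_rw [real_inner_smul_left]
    simp_rw [← real_inner_self_eq_norm_sq, hself, inner_neg_right, neg_mul, Finset.sum_neg_distrib,
      mul_comm]
  have h := sum_inner_mul_toReal_nonneg hN hinj hb hint (-W)
  rw [hWW] at h
  exact norm_eq_zero.1 (by nlinarith [norm_nonneg W])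

theorem sum_toReal_hausdorffMeasure_face_smul_eq_zero (hN : ∀ i, ‖N i‖ = 1)
    (hinj : Injective fun i => (N i, d i)) (hb : IsBounded (polyhedron N d))
    (hint : (interior (polyhedron N d)).Nonempty) :
    ∑ j, (μH[(finrank ℝ V - 1 : ℕ)] (face N d j)).toReal • N j = 0 := by
  have h := sum_toReal_euclideanHausdorffMeasure_face_smul_eq_zero hN hinj hb hint
  simp_rw [Measure.euclideanHausdorffMeasure_def, Measure.smul_apply, ENNReal.smul_def,
    smul_eq_mul, ENNReal.toReal_mul, ENNReal.coe_toReal, ← smul_smul, ← Finset.smul_sum] at h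
  exact (smul_eq_zero.1 h).resolve_left
    (NNReal.coe_ne_zero.2 (Measure.addHaarScalarFactor_volume_hausdorffMeasure_ne_zero _))

end Measure

theorem sphere_packing_martingale_general (n : ℕ) (v : EuclideanSpace ℝ (Fin 3))
    (u : Fin n → EuclideanSpace ℝ (Fin 3)) (d : Fin n → ℝ)
    (hne : ∀ i, u i ≠ v)
    (hinj : Function.Injective (fun i => (‖u i - v‖⁻¹ • (u i - v), d i)))
    (P : Set (EuclideanSpace ℝ (Fin 3)))
    (hP : P = ⋂ i, {x | ⟪‖u i - v‖⁻¹ • (u i - v), x - v⟫ ≤ d i})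
    (hbdd : Bornology.IsBounded P)
    (hint : (interior P).Nonempty)
    (Q : Fin n → Set (EuclideanSpace ℝ (Fin 3)))
    (hQ : ∀ i, Q i = P ∩ {x | ⟪‖u i - v‖⁻¹ • (u i - v), x - v⟫ = d i})
    (c : Fin n → ℝ)
    (hc : ∀ i, c i = (μH[2] (Q i)).toReal / ‖u i - v‖) :
    ∑ i, (c i / ∑ j, c j) • (u i - v) = 0 := by
  set N := fun i => ‖u i - v‖⁻¹ • (u i - v)
  set e := fun i => d i + ⟪N i, v⟫
  have hN (i : Fin n) : ‖N i‖ = 1 := norm_smul_inv_norm (sub_ne_zero.2 (hne i))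
  have hPe : P = polyhedron N e := by
    rw [hP]
    ext x
    simp only [polyhedron, mem_iInter, mem_ofPred_eq, inner_sub_right, sub_le_iff_le_add, e, N]
  have hQe (i : Fin n) : Q i = face N e i := by
    rw [hQ, hPe]
    ext x
    simp only [face, mem_inter_iff, mem_ofPred_eq, inner_sub_right, sub_eq_iff_eq_add, e, N]
  have hinj' : Injective fun i => (N i, e i) := fun i j h => by
    have hNij : N i = N j := congrArg Prod.fst h
    have hdij : d i = d j := by simpa [e, hNij] using congrArg Prod.snd h
    exact hinj (Prod.ext hNij hdij)
  have harea := sum_toReal_hausdorffMeasure_face_smul_eq_zero hN hinj' (hPe ▸ hbdd) (hPe ▸ hint)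
  have hterm (i : Fin n) : c i • (u i - v) = (μH[2] (face N e i)).toReal • N i := by
    rw [hc, ← hQe, div_eq_mul_inv, mul_smul]
  rw [show ((finrank ℝ (EuclideanSpace ℝ (Fin 3)) - 1 : ℕ) : ℝ) = 2 by simp] at harea
  calc ∑ i, (c i / ∑ j, c j) • (u i - v) = (∑ j, c j)⁻¹ • ∑ i, c i • (u i - v) := by
        simp_rw [Finset.smul_sum, smul_smul, div_eq_inv_mul]
    _ = 0 := by simp_rw [hterm, harea, smul_zero]

/-- Martingale property of the higher-dimensional analogue of the Dubejko weights:
let `v ∈ ℝ³` be a covered vertex of a covering sphere packing with neighbours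
`u 1, …, u n`, whose polyhedron `P` is the bounded intersection of the half-spaces
containing `v` bounded by the common tangent planes (with outward unit normals
`(u i - v)/‖u i - v‖` at distances `d i > 0` from `v`), and let
`Q i` be the face of `P` in the `i`-th tangent plane, `c i = Area(Q i)/‖u i - v‖`
the edge weights and `π(v) = Σ c i`. Then `Σ (c i / π(v)) • (u i - v) = 0`. -/
theorem sphere_packing_martingale (n : ℕ) (v : EuclideanSpace ℝ (Fin 3))
    (u : Fin n → EuclideanSpace ℝ (Fin 3)) (d : Fin n → ℝ)
    (hne : ∀ i, u i ≠ v) (hd : ∀ i, 0 < d i)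
    (hinj : Function.Injective (fun i => (‖u i - v‖⁻¹ • (u i - v), d i)))
    (P : Set (EuclideanSpace ℝ (Fin 3)))
    (hP : P = ⋂ i, {x | ⟪‖u i - v‖⁻¹ • (u i - v), x - v⟫ ≤ d i})
    (hbdd : Bornology.IsBounded P)
    (hint : (interior P).Nonempty)
    (Q : Fin n → Set (EuclideanSpace ℝ (Fin 3)))
    (hQ : ∀ i, Q i = P ∩ {x | ⟪‖u i - v‖⁻¹ • (u i - v), x - v⟫ = d i})
    (c : Fin n → ℝ)
    (hc : ∀ i, c i = (μH[2] (Q i)).toReal / ‖u i - v‖)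
    (hpos : 0 < ∑ i, c i) :
    ∑ i, (c i / ∑ j, c j) • (u i - v) = 0 :=
  sphere_packing_martingale_general n v u d hne hinj P hP hbdd hint Q hQ c hc
end
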